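/- Let W₁, W₂ : Y → [0,1] be two probability mass functions on a countable set Y, let Z ⊆ Y be a decoding set, and define the type I error P₁ = 1 − Σ_{y ∈ Z} W₁(y) and type II error P₂ = Σ_{y ∈ Z} W₂(y). Suppose there exist η ∈ [0,1] and a set F ⊆ Y such that W₁(y) − W₂(y) ≤ η·W₁(y) for all y ∈ Z ∩ F, and Σ_{y ∈ Z ∩ Fᶜ} W₁(y) ≤ η. Then P₁ + P₂ ≥ 1 − 2η. -/

import Mathlib

/-!
Split `Z` into `Z ∩ F` and `Z ∩ Fᶜ`. On `Z ∩ F` the pointwise bound sums to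
`W₁(Z ∩ F) - W₂(Z ∩ F) ≤ η W₁(Z ∩ F) ≤ η`, and `W₁(Z ∩ Fᶜ) ≤ η` by assumption, so
`W₁(Z) - W₂(Z) ≤ W₁(Z) - W₂(Z ∩ F) ≤ 2η`.
-/

theorem Summable.of_tsum_ne_zero {ι α : Type*} [AddCommMonoid α] [TopologicalSpace α]
    {f : ι → α} (h : ∑' i, f i ≠ 0) : Summable f :=
  not_not.mp (mt tsum_eq_zero_of_not_summable h)

namespace Summable

variable {ι : Type*} {f g : ι → ℝ}

theorem tsum_subtype_eq_tsum_inter_add_tsum_inter_compl (hf : Summable f) (s t : Set ι) :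
    ∑' i : s, f i = ∑' i : (s ∩ t : Set ι), f i + ∑' i : (s ∩ tᶜ : Set ι), f i := by
  rw [tsum_congr_set_coe f (Set.inter_union_compl s t).symm]
  exact (hf.subtype _).tsum_union_disjoint ((disjoint_compl_right (a := t)).mono
    Set.inter_subset_right Set.inter_subset_right) (hf.subtype _)

theorem tsum_subtype_mono (hf : Summable f) (hf₀ : ∀ i, 0 ≤ f i) {s t : Set ι} (hst : s ⊆ t) :
    ∑' i : s, f i ≤ ∑' i : t, f i :=
  (hf.subtype s).tsum_le_tsum_of_inj (Set.inclusion hst) (Set.inclusion_injective hst)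
    (fun i _ ↦ hf₀ i) (fun _ ↦ le_rfl) (hf.subtype t)

theorem tsum_sub_tsum_le_mul_tsum (hf : Summable f) (hg : Summable g) {c : ℝ}
    (h : ∀ i, f i - g i ≤ c * f i) : ∑' i, f i - ∑' i, g i ≤ c * ∑' i, f i := by
  rw [← hf.tsum_sub hg, ← tsum_mul_left]
  exact (hf.sub hg).tsum_le_tsum h (hf.mul_left c)

end Summable

theorem identification_error_sum_lower_bound_general {Y : Type*}
    (W₁ W₂ : Y → ℝ) (hW₁ : ∀ y, 0 ≤ W₁ y) (hW₂ : ∀ y, 0 ≤ W₂ y)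
    (hW₁sum : ∑' y : Y, W₁ y = 1) (hW₂sum : ∑' y : Y, W₂ y = 1)
    (Z F : Set Y) (η : ℝ) (hη0 : 0 ≤ η)
    (h1 : ∀ y ∈ Z ∩ F, W₁ y - W₂ y ≤ η * W₁ y)
    (h2 : ∑' y : (Z ∩ Fᶜ : Set Y), W₁ y ≤ η) :
    1 - 2 * η ≤ (1 - ∑' y : Z, W₁ y) + ∑' y : Z, W₂ y := by
  have hS₁ : Summable W₁ := .of_tsum_ne_zero (hW₁sum ▸ one_ne_zero)
  have hS₂ : Summable W₂ := .of_tsum_ne_zero (hW₂sum ▸ one_ne_zero)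
  have hsplit := hS₁.tsum_subtype_eq_tsum_inter_add_tsum_inter_compl Z F
  have hgap : ∑' y : (Z ∩ F : Set Y), W₁ y - ∑' y : (Z ∩ F : Set Y), W₂ y
      ≤ η * ∑' y : (Z ∩ F : Set Y), W₁ y :=
    (hS₁.subtype _).tsum_sub_tsum_le_mul_tsum (hS₂.subtype _) fun y ↦ h1 y y.2
  have hmass : η * ∑' y : (Z ∩ F : Set Y), W₁ y ≤ η :=
    mul_le_of_le_one_right hη0 (hW₁sum ▸ hS₁.tsum_subtype_le W₁ _ hW₁)
  have hW₂mono := hS₂.tsum_subtype_mono hW₂ (Set.inter_subset_left : Z ∩ F ⊆ Z)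
  linarith

/-- Core converse argument for identification codes: if `W₁(y) − W₂(y) ≤ η W₁(y)`
on `Z ∩ F` and the `W₁`-mass of `Z ∩ Fᶜ` is at most `η`, then the sum of the
type I and type II errors is at least `1 − 2η`. -/
theorem identification_error_sum_lower_bound {Y : Type*} [Countable Y]
    (W₁ W₂ : Y → ℝ) (hW₁ : ∀ y, 0 ≤ W₁ y) (hW₂ : ∀ y, 0 ≤ W₂ y)
    (hW₁sum : ∑' y : Y, W₁ y = 1) (hW₂sum : ∑' y : Y, W₂ y = 1)
    (Z F : Set Y) (η : ℝ) (hη0 : 0 ≤ η) (hη1 : η ≤ 1)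
    (h1 : ∀ y ∈ Z ∩ F, W₁ y - W₂ y ≤ η * W₁ y)
    (h2 : ∑' y : (Z ∩ Fᶜ : Set Y), W₁ y ≤ η) :
    1 - 2 * η ≤ (1 - ∑' y : Z, W₁ y) + ∑' y : Z, W₂ y :=
  identification_error_sum_lower_bound_general W₁ W₂ hW₁ hW₂ hW₁sum hW₂sum Z F η hη0 h1 h2
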